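/- arXiv:2501.03834 — 3 statements merged into one kernel-verified Lean document; each statement's English description precedes it below -/
import Mathlib

section
/- Let r be a point on the image of R and let b be a nearest neighbor of r on B. Let γ be a continuous path in P from r to b whose length equals d(r, b) (a geodesic from r to b). Then for every point r' on the image of R and every point b' on the image of B such that r' and b' lie in different connected components of P \ (image of γ), one has d(r', b) ≤ d(r', b'). -/
/-!
Any path `σ` in `P` from `r'` to `b'` must cross the geodesic `γ`, say at `x = γ s`. Cutting `γ`
at `x` shows `d(x, b) ≤ d(x, b')`: otherwise the first part of `γ` followed by a shortest path
from `x` to `b'` would reach `B` from `r` faster than `γ` reaches the nearest neighbor `b`. Hence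
`d(r', b) ≤ d(r', x) + d(x, b) ≤ d(r', x) + d(x, b') ≤ length σ`.

Distances are handled in `ℝ≥0∞`; passing back to `ℝ` uses that `b` and `b'` are joined by the
rectifiable curve `B`, so `d(r', b)` and `d(r', b')` are infinite together.
-/

open Set

noncomputable section

abbrev E2 := EuclideanSpace ℝ (Fin 2)

/-- `R` is piecewise affine on `[0,1]` with finitely many breakpoints. -/
def IsPiecewiseAffine (R : ℝ → E2) : Prop :=
  ∃ (k : ℕ) (t : ℕ → ℝ), 0 < k ∧ t 0 = 0 ∧ t k = 1 ∧
    (∀ i < k, t i < t (i + 1)) ∧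
    ∀ i < k, ∀ x ∈ Icc (t i) (t (i + 1)),
      R x = R (t i) + ((x - t i) / (t (i + 1) - t i)) • (R (t (i + 1)) - R (t i))

/-- The two simple polygonal curves bound a simple polygon: continuous, piecewise
affine, injective, sharing exactly their common endpoints. -/
def SimplePolygonalPair (R B : ℝ → E2) : Prop :=
  ContinuousOn R (Icc 0 1) ∧ ContinuousOn B (Icc 0 1) ∧
  IsPiecewiseAffine R ∧ IsPiecewiseAffine B ∧
  InjOn R (Icc 0 1) ∧ InjOn B (Icc 0 1) ∧
  R 0 = B 0 ∧ R 1 = B 1 ∧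
  (R '' Icc 0 1) ∩ (B '' Icc 0 1) = {R 0, R 1}

/-- The image of the Jordan curve formed by `R` and the reverse of `B`. -/
def jordanImage (R B : ℝ → E2) : Set E2 := R '' Icc 0 1 ∪ B '' Icc 0 1

/-- The simple polygon bounded by `R` and `B`: the Jordan curve together with the
bounded connected components of its complement. -/
def polygonOf (R B : ℝ → E2) : Set E2 :=
  jordanImage R B ∪
    {x | x ∉ jordanImage R B ∧
      Bornology.IsBounded (connectedComponentIn (jordanImage R B)ᶜ x)}

/-- Length (total variation) of a path parameterized over `[0,1]`. -/
def pathLength (γ : ℝ → E2) : ENNReal := eVariationOn γ (Icc 0 1)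

/-- Geodesic distance inside `P`: infimum of lengths of continuous paths in `P`. -/
def geodDist (P : Set E2) (p q : E2) : ℝ :=
  (⨅ γ : {γ : ℝ → E2 // ContinuousOn γ (Icc 0 1) ∧ γ 0 = p ∧ γ 1 = q ∧
      γ '' Icc 0 1 ⊆ P}, pathLength γ.1).toReal

/-- A reparameterization: a nondecreasing surjection of `[0,1]` onto `[0,1]`. -/
def IsRepar (f : ℝ → ℝ) : Prop :=
  MonotoneOn f (Icc 0 1) ∧ MapsTo f (Icc 0 1) (Icc 0 1) ∧ SurjOn f (Icc 0 1) (Icc 0 1)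

/-- The cost of a matching `(f, g)`. -/
def matchingCost (P : Set E2) (R B : ℝ → E2) (f g : ℝ → ℝ) : ℝ :=
  sSup {c : ℝ | ∃ t ∈ Icc (0:ℝ) 1, c = geodDist P (R (f t)) (B (g t))}

/-- The geodesic Fréchet distance between `R` and `B` with geodesics in `P`. -/
def frechetDist (P : Set E2) (R B : ℝ → E2) : ℝ :=
  sInf {c : ℝ | ∃ f g : ℝ → ℝ, IsRepar f ∧ IsRepar g ∧ c = matchingCost P R B f g}

/-- A `δ`-matching: a matching of cost at most `δ`. -/
def IsDeltaMatching (P : Set E2) (R B : ℝ → E2) (δ : ℝ) (f g : ℝ → ℝ) : Prop :=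
  IsRepar f ∧ IsRepar g ∧ ∀ t ∈ Icc (0:ℝ) 1, geodDist P (R (f t)) (B (g t)) ≤ δ

/-- `b` is a nearest neighbor of `r` among the points of `B`. -/
def IsNearestNeighbor (P : Set E2) (B : ℝ → E2) (r b : E2) : Prop :=
  b ∈ B '' Icc (0:ℝ) 1 ∧ ∀ b' ∈ B '' Icc (0:ℝ) 1, geodDist P r b ≤ geodDist P r b'

lemma boundedVariationOn_affine {E : Type*} [NormedAddCommGroup E] [NormedSpace ℝ E]
    (p v : E) (c d a b : ℝ) :
    BoundedVariationOn (fun x : ℝ => p + ((x - c) / d) • v) (Icc a b) := by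
  have hlip : LipschitzWith (‖v‖₊ * ‖d⁻¹‖₊) (fun x : ℝ => p + ((x - c) / d) • v) := by
    refine LipschitzWith.of_dist_le_mul fun x y => le_of_eq ?_
    rw [dist_add_left, dist_eq_norm, ← sub_smul, norm_smul, Real.dist_eq, ← sub_div,
      sub_sub_sub_cancel_right, div_eq_mul_inv, norm_mul, NNReal.coe_mul, coe_nnnorm, coe_nnnorm,
      Real.norm_eq_abs]
    ring
  simpa using hlip.locallyBoundedVariationOn univ a b trivial trivial

lemma boundedVariationOn_Icc_of_forall_Icc_succ {E : Type*} [PseudoEMetricSpace E] {f : ℝ → E}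
    {t : ℕ → ℝ} {k : ℕ}
    (hmono : ∀ i < k, t i ≤ t (i + 1))
    (hpiece : ∀ i < k, BoundedVariationOn f (Icc (t i) (t (i + 1)))) :
    BoundedVariationOn f (Icc (t 0) (t k)) := by
  suffices ∀ n ≤ k, t 0 ≤ t n ∧ BoundedVariationOn f (Icc (t 0) (t n)) from (this k le_rfl).2
  intro n
  induction n with
  | zero => exact fun _ => ⟨le_rfl, by simp [BoundedVariationOn, eVariationOn.subsingleton]⟩
  | succ n ih =>
    intro hn
    obtain ⟨h0n, hbv⟩ := ih (by omega)
    refine ⟨h0n.trans (hmono n hn), ?_⟩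
    have hsplit := eVariationOn.Icc_add_Icc f h0n (hmono n hn) (mem_univ (t n))
    simp only [univ_inter] at hsplit
    rw [BoundedVariationOn, ← hsplit]
    exact ENNReal.add_ne_top.mpr ⟨hbv, hpiece n hn⟩

lemma IsPiecewiseAffine.boundedVariationOn {C : ℝ → E2} (h : IsPiecewiseAffine C) :
    BoundedVariationOn C (Icc 0 1) := by
  obtain ⟨k, t, -, ht0, htk, hlt, haff⟩ := h
  rw [← ht0, ← htk]
  refine boundedVariationOn_Icc_of_forall_Icc_succ (fun i hi => (hlt i hi).le) fun i hi => ?_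
  rw [BoundedVariationOn, eVariationOn.eq_of_eqOn (haff i hi)]
  exact boundedVariationOn_affine _ _ _ _ _ _

lemma inter_nonempty_of_connectedComponentIn_ne {X : Type*}
    [TopologicalSpace X] {s P K : Set X} {x y : X} (hs : IsPreconnected s) (hsP : s ⊆ P)
    (hx : x ∈ s) (hy : y ∈ s)
    (hxy : connectedComponentIn (P \ K) x ≠ connectedComponentIn (P \ K) y) :
    (s ∩ K).Nonempty := by
  by_contra hsK
  have hsPK : s ⊆ P \ K := fun z hz => ⟨hsP hz, fun hzK => hsK ⟨z, hz, hzK⟩⟩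
  exact hxy (connectedComponentIn_eq (hs.subset_connectedComponentIn hx hsPK hy))

section PathConcat

variable {X : Type*}

def pathConcat (γ₁ γ₂ : ℝ → X) (t : ℝ) : X :=
  if t ≤ 1 / 2 then γ₁ (2 * t) else γ₂ (2 * t - 1)

lemma eqOn_pathConcat_left (γ₁ γ₂ : ℝ → X) :
    EqOn (pathConcat γ₁ γ₂) (γ₁ ∘ fun t => 2 * t) (Icc 0 (1 / 2)) :=
  fun _ ht => if_pos ht.2

lemma eqOn_pathConcat_right {γ₁ γ₂ : ℝ → X} (h : γ₁ 1 = γ₂ 0) :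
    EqOn (pathConcat γ₁ γ₂) (γ₂ ∘ fun t => 2 * t - 1) (Icc (1 / 2) 1) := by
  rintro t ⟨ht, -⟩
  rcases ht.eq_or_lt with rfl | ht
  · simp [pathConcat, h]
  · exact if_neg (not_le.mpr ht)

lemma mapsTo_double_Icc : MapsTo (fun t : ℝ => 2 * t) (Icc 0 (1 / 2)) (Icc 0 1) :=
  fun _ ⟨h₀, h₁⟩ => ⟨by linarith, by linarith⟩

lemma mapsTo_double_sub_one_Icc : MapsTo (fun t : ℝ => 2 * t - 1) (Icc (1 / 2) 1) (Icc 0 1) :=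
  fun _ ⟨h₀, h₁⟩ => ⟨by linarith, by linarith⟩

lemma Icc_half_union_Icc_half : Icc (0 : ℝ) (1 / 2) ∪ Icc (1 / 2) 1 = Icc 0 1 :=
  Icc_union_Icc_eq_Icc (by norm_num) (by norm_num)

lemma continuousOn_pathConcat [TopologicalSpace X] {γ₁ γ₂ : ℝ → X}
    (h₁ : ContinuousOn γ₁ (Icc 0 1)) (h₂ : ContinuousOn γ₂ (Icc 0 1)) (h : γ₁ 1 = γ₂ 0) :
    ContinuousOn (pathConcat γ₁ γ₂) (Icc 0 1) := by
  rw [← Icc_half_union_Icc_half]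
  refine ContinuousOn.union_of_isClosed ?_ ?_ isClosed_Icc isClosed_Icc
  · exact (h₁.comp (by fun_prop) mapsTo_double_Icc).congr (eqOn_pathConcat_left γ₁ γ₂)
  · exact (h₂.comp (by fun_prop) mapsTo_double_sub_one_Icc).congr (eqOn_pathConcat_right h)

lemma image_pathConcat_subset {γ₁ γ₂ : ℝ → X} (h : γ₁ 1 = γ₂ 0) :
    pathConcat γ₁ γ₂ '' Icc 0 1 ⊆ γ₁ '' Icc 0 1 ∪ γ₂ '' Icc 0 1 := by
  conv_lhs => rw [← Icc_half_union_Icc_half, image_union, (eqOn_pathConcat_left γ₁ γ₂).image_eq,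
    (eqOn_pathConcat_right h).image_eq, image_comp, image_comp]
  exact union_subset_union (image_mono mapsTo_double_Icc.image_subset)
    (image_mono mapsTo_double_sub_one_Icc.image_subset)

lemma eVariationOn_pathConcat_le [PseudoEMetricSpace X] {γ₁ γ₂ : ℝ → X} (h : γ₁ 1 = γ₂ 0) :
    eVariationOn (pathConcat γ₁ γ₂) (Icc 0 1) ≤
      eVariationOn γ₁ (Icc 0 1) + eVariationOn γ₂ (Icc 0 1) := by
  have hsplit := eVariationOn.Icc_add_Icc (pathConcat γ₁ γ₂) (by norm_num : (0 : ℝ) ≤ 1 / 2)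
    (by norm_num : (1 / 2 : ℝ) ≤ 1) (mem_univ _)
  simp only [univ_inter] at hsplit
  rw [← hsplit, eVariationOn.eq_of_eqOn (eqOn_pathConcat_left γ₁ γ₂),
    eVariationOn.eq_of_eqOn (eqOn_pathConcat_right h)]
  gcongr
  · exact eVariationOn.comp_le_of_monotoneOn _ _
      (fun _ _ _ _ hst => by linarith) mapsTo_double_Icc
  · exact eVariationOn.comp_le_of_monotoneOn _ _
      (fun _ _ _ _ hst => by linarith) mapsTo_double_sub_one_Icc

end PathConcat

/-- The geodesic distance before truncation to `ℝ`: it is `⊤` when no rectifiable path in `P`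
joins the two points, a case in which `geodDist` takes the junk value `0`. -/
def eGeodDist (P : Set E2) (p q : E2) : ENNReal :=
  ⨅ γ : {γ : ℝ → E2 // ContinuousOn γ (Icc 0 1) ∧ γ 0 = p ∧ γ 1 = q ∧
      γ '' Icc 0 1 ⊆ P}, pathLength γ.1

lemma geodDist_eq_toReal (P : Set E2) (p q : E2) : geodDist P p q = (eGeodDist P p q).toReal :=
  rfl

lemma eGeodDist_le_pathLength {P : Set E2} {σ : ℝ → E2} (hσc : ContinuousOn σ (Icc 0 1))
    (hσP : σ '' Icc 0 1 ⊆ P) : eGeodDist P (σ 0) (σ 1) ≤ pathLength σ :=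
  iInf_le (fun γ : {γ : ℝ → E2 // ContinuousOn γ (Icc 0 1) ∧ γ 0 = σ 0 ∧ γ 1 = σ 1 ∧
      γ '' Icc 0 1 ⊆ P} => pathLength γ.1) ⟨σ, hσc, rfl, rfl, hσP⟩

lemma eGeodDist_le_eVariationOn_uIcc {P : Set E2} {σ : ℝ → E2} (hσc : ContinuousOn σ (Icc 0 1))
    (hσP : σ '' Icc 0 1 ⊆ P) {u v : ℝ} (hu : u ∈ Icc (0 : ℝ) 1) (hv : v ∈ Icc (0 : ℝ) 1) :
    eGeodDist P (σ u) (σ v) ≤ eVariationOn σ (uIcc u v) := by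
  set φ : ℝ → ℝ := ⇑(AffineMap.lineMap (k := ℝ) u v)
  have hφ : MapsTo φ (Icc 0 1) (uIcc u v) := by
    rw [← segment_eq_uIcc, segment_eq_image_lineMap]
    exact mapsTo_image _ _
  have hφ' : MapsTo φ (Icc 0 1) (Icc 0 1) := hφ.mono_right (uIcc_subset_Icc hu hv)
  have h := eGeodDist_le_pathLength (P := P)
    (hσc.comp AffineMap.lineMap_continuous.continuousOn hφ')
    ((image_comp σ φ _).trans_subset ((image_mono hφ'.image_subset).trans hσP))
  simp only [Function.comp, AffineMap.lineMap_apply_zero, AffineMap.lineMap_apply_one] at h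
  refine h.trans ?_
  rcases le_total u v with huv | hvu
  · exact eVariationOn.comp_le_of_monotoneOn σ φ ((AffineMap.lineMap_mono huv).monotoneOn _) hφ
  · exact eVariationOn.comp_le_of_antitoneOn σ φ ((AffineMap.lineMap_anti hvu).antitoneOn _) hφ

lemma eGeodDist_le_pathLength_add {P : Set E2} {γ₁ γ₂ : ℝ → E2}
    (h₁c : ContinuousOn γ₁ (Icc 0 1)) (h₁P : γ₁ '' Icc 0 1 ⊆ P)
    (h₂c : ContinuousOn γ₂ (Icc 0 1)) (h₂P : γ₂ '' Icc 0 1 ⊆ P) (h : γ₁ 1 = γ₂ 0) :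
    eGeodDist P (γ₁ 0) (γ₂ 1) ≤ pathLength γ₁ + pathLength γ₂ := by
  have hσ := eGeodDist_le_pathLength (P := P) (continuousOn_pathConcat h₁c h₂c h)
    ((image_pathConcat_subset h).trans (union_subset h₁P h₂P))
  simp only [pathConcat, if_pos (by norm_num : (0 : ℝ) ≤ 1 / 2),
    if_neg (by norm_num : ¬(1 : ℝ) ≤ 1 / 2), mul_zero, mul_one, show (2 : ℝ) - 1 = 1 by norm_num]
    at hσ
  exact hσ.trans (eVariationOn_pathConcat_le h)

lemma eGeodDist_triangle (P : Set E2) (p x q : E2) :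
    eGeodDist P p q ≤ eGeodDist P p x + eGeodDist P x q := by
  conv_rhs => rw [eGeodDist, eGeodDist, ENNReal.iInf_add]; enter [1, γ₁]; rw [ENNReal.add_iInf]
  refine le_iInf₂ fun ⟨γ₁, h₁c, h₁0, h₁1, h₁P⟩ ⟨γ₂, h₂c, h₂0, h₂1, h₂P⟩ => ?_
  subst h₁0 h₂1
  exact eGeodDist_le_pathLength_add h₁c h₁P h₂c h₂P (h₁1.trans h₂0.symm)

lemma pathLength_eq_add (σ : ℝ → E2) {u : ℝ} (hu : u ∈ Icc (0 : ℝ) 1) :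
    pathLength σ = eVariationOn σ (Icc 0 u) + eVariationOn σ (Icc u 1) := by
  simpa [pathLength] using (eVariationOn.Icc_add_Icc σ hu.1 hu.2 (mem_univ u)).symm

lemma eGeodDist_ne_top_of_boundedVariationOn {P : Set E2} {σ : ℝ → E2}
    (hσc : ContinuousOn σ (Icc 0 1)) (hσP : σ '' Icc 0 1 ⊆ P)
    (hσ : BoundedVariationOn σ (Icc 0 1)) {u v : ℝ} (hu : u ∈ Icc (0 : ℝ) 1)
    (hv : v ∈ Icc (0 : ℝ) 1) : eGeodDist P (σ u) (σ v) ≠ ⊤ :=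
  ne_top_of_le_ne_top (ne_top_of_le_ne_top hσ (eVariationOn.mono σ (uIcc_subset_Icc hu hv)))
    (eGeodDist_le_eVariationOn_uIcc hσc hσP hu hv)

lemma eGeodDist_le_of_forall_path_meets {P : Set E2} {p q q' : E2}
    (h : ∀ σ : ℝ → E2, ContinuousOn σ (Icc 0 1) → σ '' Icc 0 1 ⊆ P → σ 0 = p → σ 1 = q' →
      ∃ u ∈ Icc (0 : ℝ) 1, eGeodDist P (σ u) q ≤ eGeodDist P (σ u) q') :
    eGeodDist P p q ≤ eGeodDist P p q' := by
  conv_rhs => rw [eGeodDist]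
  refine le_iInf fun ⟨σ, hσc, hσ0, hσ1, hσP⟩ => ?_
  obtain ⟨u, hu, hσu⟩ := h σ hσc hσP hσ0 hσ1
  have h₁ := eGeodDist_le_eVariationOn_uIcc hσc hσP (left_mem_Icc.2 zero_le_one) hu
  have h₂ := eGeodDist_le_eVariationOn_uIcc hσc hσP hu (right_mem_Icc.2 zero_le_one)
  rw [uIcc_of_le hu.1, hσ0] at h₁
  rw [uIcc_of_le hu.2, hσ1] at h₂
  calc eGeodDist P p q ≤ eGeodDist P p (σ u) + eGeodDist P (σ u) q := eGeodDist_triangle P _ _ _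
    _ ≤ eVariationOn σ (Icc 0 u) + eVariationOn σ (Icc u 1) := add_le_add h₁ (hσu.trans h₂)
    _ = pathLength σ := (pathLength_eq_add σ hu).symm

lemma eGeodDist_le_of_mem_shortestPath {P : Set E2} {γ : ℝ → E2} {p q q' : E2}
    (hγc : ContinuousOn γ (Icc 0 1)) (hγP : γ '' Icc 0 1 ⊆ P) (hγ0 : γ 0 = p) (hγ1 : γ 1 = q)
    (hγ : pathLength γ = eGeodDist P p q) (hγfin : pathLength γ ≠ ⊤)
    (hnear : eGeodDist P p q ≤ eGeodDist P p q') {s : ℝ} (hs : s ∈ Icc (0 : ℝ) 1) :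
    eGeodDist P (γ s) q ≤ eGeodDist P (γ s) q' := by
  subst hγ0 hγ1
  have h₁ := eGeodDist_le_eVariationOn_uIcc hγc hγP (left_mem_Icc.2 zero_le_one) hs
  have h₂ := eGeodDist_le_eVariationOn_uIcc hγc hγP hs (right_mem_Icc.2 zero_le_one)
  rw [uIcc_of_le hs.1] at h₁
  rw [uIcc_of_le hs.2] at h₂
  have hsplit := pathLength_eq_add γ hs
  have hfin₁ : eVariationOn γ (Icc 0 s) ≠ ⊤ := ne_top_of_le_ne_top hγfin (hsplit ▸ le_self_add)
  refine h₂.trans ((ENNReal.add_le_add_iff_left hfin₁).1 ?_)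
  calc eVariationOn γ (Icc 0 s) + eVariationOn γ (Icc s 1)
      = eGeodDist P (γ 0) (γ 1) := hsplit.symm.trans hγ
    _ ≤ eGeodDist P (γ 0) q' := hnear
    _ ≤ eGeodDist P (γ 0) (γ s) + eGeodDist P (γ s) q' := eGeodDist_triangle P _ _ _
    _ ≤ eVariationOn γ (Icc 0 s) + eGeodDist P (γ s) q' := add_le_add_left h₁ _

theorem geodesic_separator_shortcut_general
    (R B : ℝ → E2) (hRB : SimplePolygonalPair R B)
    (P : Set E2) (hP : P = polygonOf R B)
    (r b : E2) (hb : IsNearestNeighbor P B r b)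
    (γ : ℝ → E2) (hγc : ContinuousOn γ (Icc 0 1)) (hγ0 : γ 0 = r) (hγ1 : γ 1 = b)
    (hγP : γ '' Icc (0:ℝ) 1 ⊆ P)
    (hγlen : pathLength γ = ENNReal.ofReal (geodDist P r b))
    (r' b' : E2) (hb' : b' ∈ B '' Icc (0:ℝ) 1)
    (hdiff : connectedComponentIn (P \ γ '' Icc (0:ℝ) 1) r' ≠
             connectedComponentIn (P \ γ '' Icc (0:ℝ) 1) b') :
    geodDist P r' b ≤ geodDist P r' b' := by
  obtain ⟨⟨t, ht, rfl⟩, hnear⟩ := hb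
  simp only [geodDist_eq_toReal] at hnear hγlen ⊢
  obtain ⟨t', ht', rfl⟩ := hb'
  have hBP : B '' Icc 0 1 ⊆ P := hP ▸ fun _ hx => Or.inl (Or.inr hx)
  have hbb' : eGeodDist P (B t) (B t') ≠ ⊤ :=
    eGeodDist_ne_top_of_boundedVariationOn hRB.2.1 hBP hRB.2.2.2.1.boundedVariationOn ht ht'
  have hγfin : pathLength γ ≠ ⊤ := hγlen ▸ ENNReal.ofReal_ne_top
  have hγ : pathLength γ = eGeodDist P r (B t) := le_antisymm
    (hγlen.trans_le ENNReal.ofReal_toReal_le) (hγ0 ▸ hγ1 ▸ eGeodDist_le_pathLength hγc hγP)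
  have hnear' : eGeodDist P r (B t) ≤ eGeodDist P r (B t') :=
    (ENNReal.toReal_le_toReal (hγ ▸ hγfin) (ne_top_of_le_ne_top
      (ENNReal.add_ne_top.2 ⟨hγ ▸ hγfin, hbb'⟩) (eGeodDist_triangle P _ _ _))).1
      (hnear _ (mem_image_of_mem B ht'))
  have key : eGeodDist P r' (B t) ≤ eGeodDist P r' (B t') :=
    eGeodDist_le_of_forall_path_meets fun σ hσc hσP hσ0 hσ1 => by
      obtain ⟨_, ⟨u, hu, rfl⟩, s, hs, hγs⟩ := inter_nonempty_of_connectedComponentIn_ne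
        (isPreconnected_Icc.image σ hσc) hσP (hσ0 ▸ mem_image_of_mem σ (left_mem_Icc.2 zero_le_one))
        (hσ1 ▸ mem_image_of_mem σ (right_mem_Icc.2 zero_le_one)) hdiff
      exact ⟨u, hu, hγs ▸ eGeodDist_le_of_mem_shortestPath hγc hγP hγ0 hγ1 hγ hγfin hnear' hs⟩
  refine ENNReal.toReal_mono' key fun htop => ?_
  by_contra hfin
  exact ENNReal.add_ne_top.2 ⟨hfin, hbb'⟩ (top_le_iff.1 (htop ▸ eGeodDist_triangle P _ _ _))

/-- If `b` is a nearest neighbor of `r ∈ R` and `γ` is a geodesic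
from `r` to `b` in `P`, then for points `r'` on `R` and `b'` on `B` that lie in
different connected components of `P \ image γ`, we have `d(r', b) ≤ d(r', b')`. -/
theorem geodesic_separator_shortcut
    (R B : ℝ → E2) (hRB : SimplePolygonalPair R B)
    (P : Set E2) (hP : P = polygonOf R B)
    (r b : E2) (hr : r ∈ R '' Icc (0:ℝ) 1) (hb : IsNearestNeighbor P B r b)
    (γ : ℝ → E2) (hγc : ContinuousOn γ (Icc 0 1)) (hγ0 : γ 0 = r) (hγ1 : γ 1 = b)
    (hγP : γ '' Icc (0:ℝ) 1 ⊆ P)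
    (hγlen : pathLength γ = ENNReal.ofReal (geodDist P r b))
    (r' b' : E2) (hr' : r' ∈ R '' Icc (0:ℝ) 1) (hb' : b' ∈ B '' Icc (0:ℝ) 1)
    (hr'P : r' ∈ P \ γ '' Icc (0:ℝ) 1) (hb'P : b' ∈ P \ γ '' Icc (0:ℝ) 1)
    (hdiff : connectedComponentIn (P \ γ '' Icc (0:ℝ) 1) r' ≠
             connectedComponentIn (P \ γ '' Icc (0:ℝ) 1) b') :
    geodDist P r' b ≤ geodDist P r' b' :=
  geodesic_separator_shortcut_general R B hRB P hP r b hb γ hγc hγ0 hγ1 hγP hγlen r' b' hb' hdiff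
end
end

section
/- For any prefix-minimum vertex R(i) of R and any prefix-minimum vertex B(j) of B, we have d_F(R|[i, n], B|[j, m]) ≤ d_F(R, B). -/
open Set

noncomputable section

/-- `R : [1, n] → ℝ` is a one-dimensional polygonal curve with vertices
`R 1, …, R n`: it is affine on each interval `[k, k+1]`. -/
def IsPoly1D (R : ℝ → ℝ) (n : ℕ) : Prop :=
  ∀ k : ℕ, 1 ≤ k → k < n → ∀ x ∈ Icc (k : ℝ) ((k : ℝ) + 1),
    R x = R (k : ℝ) + (x - (k : ℝ)) * (R ((k : ℝ) + 1) - R (k : ℝ))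

/-- A reparameterization of `[a, b]`: a nondecreasing surjection `[0,1] → [a, b]`. -/
def IsRepar1 (f : ℝ → ℝ) (a b : ℝ) : Prop :=
  MonotoneOn f (Icc 0 1) ∧ MapsTo f (Icc 0 1) (Icc a b) ∧ SurjOn f (Icc 0 1) (Icc a b)

/-- The cost of a matching `(f, g)` between one-dimensional curves. -/
def cost1 (R B : ℝ → ℝ) (f g : ℝ → ℝ) : ℝ :=
  sSup {c : ℝ | ∃ t ∈ Icc (0:ℝ) 1, c = |R (f t) - B (g t)|}

/-- The Fréchet distance between the subcurves `R|[a, b]` and `B|[c, d]` of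
one-dimensional curves `R` and `B`. -/
def dF1 (R B : ℝ → ℝ) (a b c d : ℝ) : ℝ :=
  sInf {x : ℝ | ∃ f g : ℝ → ℝ, IsRepar1 f a b ∧ IsRepar1 g c d ∧ x = cost1 R B f g}

/-!
Clamp a matching `(f, g)` of the full curves to `(max i f, max j g)`, a matching of the suffixes.
Since `R ≤ 0 ≤ B`, the distance `|R x - B y|` splits as `|R x| + |B y|`, and by the
prefix-minimum property clamping can only decrease `|R|` and `|B|`; hence every matching of the
full curves is beaten pointwise by a matching of the suffixes. Polygonality only serves to make
the costs bounded, so that the suprema defining them are genuine.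
-/

def IsPrefixMin (R : ℝ → ℝ) (a i : ℝ) : Prop :=
  ∀ x ∈ Icc a i, |R i| ≤ |R x|

theorem IsPrefixMin.abs_apply_max_le {R : ℝ → ℝ} {a i x : ℝ} (h : IsPrefixMin R a i)
    (hx : a ≤ x) : |R (max i x)| ≤ |R x| := by
  rcases le_total i x with hix | hxi
  · rw [max_eq_right hix]
  · rw [max_eq_left hxi]
    exact h x ⟨hx, hxi⟩

theorem abs_sub_eq_abs_add_abs_of_nonpos_of_nonneg {r b : ℝ} (hr : r ≤ 0) (hb : 0 ≤ b) :
    |r - b| = |r| + |b| := by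
  rw [abs_of_nonpos (by linarith), abs_of_nonpos hr, abs_of_nonneg hb]
  ring

namespace IsPoly1D

variable {R : ℝ → ℝ} {n : ℕ}

theorem exists_vertex_abs_ge (hR : IsPoly1D R n) {x : ℝ} (hx : x ∈ Icc (1 : ℝ) n) :
    ∃ k ∈ Finset.Icc 1 n, |R x| ≤ |R k| := by
  rcases hx.2.eq_or_lt with rfl | hxn
  · exact ⟨n, Finset.mem_Icc.2 ⟨by exact_mod_cast hx.1, le_rfl⟩, le_rfl⟩
  set k := ⌊x⌋₊
  have hk1 : 1 ≤ k := Nat.le_floor (by exact_mod_cast hx.1)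
  have hkx : (k : ℝ) ≤ x := Nat.floor_le (by linarith [hx.1])
  have hxk : x ≤ k + 1 := (Nat.lt_floor_add_one x).le
  have hkn : k < n := by exact_mod_cast hkx.trans_lt hxn
  have hRx := hR k hk1 hkn x ⟨hkx, hxk⟩
  have hmax : |R x| ≤ max |R k| |R (k + 1)| := by
    rcases le_total (R k) (R (k + 1)) with h | h
    · exact abs_le_max_abs_abs (by nlinarith) (by nlinarith)
    · rw [max_comm]
      exact abs_le_max_abs_abs (by nlinarith) (by nlinarith)
  rcases max_choice |R k| |R (k + 1)| with h | h
  · exact ⟨k, Finset.mem_Icc.2 ⟨hk1, hkn.le⟩, h ▸ hmax⟩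
  · exact ⟨k + 1, Finset.mem_Icc.2 ⟨by omega, hkn⟩, by push_cast; exact h ▸ hmax⟩

theorem exists_abs_le (hR : IsPoly1D R n) : ∃ C, ∀ x ∈ Icc (1 : ℝ) n, |R x| ≤ C := by
  refine ⟨∑ k ∈ Finset.Icc 1 n, |R k|, fun x hx => ?_⟩
  obtain ⟨k, hk, hxk⟩ := hR.exists_vertex_abs_ge hx
  exact hxk.trans (Finset.single_le_sum (f := fun k : ℕ => |R k|) (fun _ _ => abs_nonneg _) hk)

end IsPoly1D

namespace IsRepar1

theorem affine {a b : ℝ} (hab : a ≤ b) : IsRepar1 (fun t => a + t * (b - a)) a b := by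
  refine ⟨fun s _ t _ hst => by dsimp only; nlinarith, fun t ht => ?_, fun y hy => ?_⟩
  · constructor <;> nlinarith [ht.1, ht.2]
  · rcases hab.eq_or_lt with rfl | hab
    · exact ⟨0, ⟨le_rfl, zero_le_one⟩, by simp [le_antisymm hy.2 hy.1]⟩
    · refine ⟨(y - a) / (b - a), ⟨div_nonneg (by linarith [hy.1]) (by linarith), ?_⟩, ?_⟩
      · rw [div_le_one (by linarith)]
        linarith [hy.2]
      · simp [div_mul_cancel₀ _ (sub_ne_zero.2 hab.ne')]

theorem max_const {f : ℝ → ℝ} {a b a' : ℝ} (hf : IsRepar1 f a b) (ha : a ≤ a') (hb : a' ≤ b) :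
    IsRepar1 (fun t => max a' (f t)) a' b := by
  refine ⟨fun s hs t ht hst => max_le_max le_rfl (hf.1 hs ht hst),
    fun t ht => ⟨le_max_left _ _, max_le hb (hf.2.1 ht).2⟩, fun y hy => ?_⟩
  obtain ⟨t, ht, rfl⟩ := hf.2.2 ⟨ha.trans hy.1, hy.2⟩
  exact ⟨t, ht, max_eq_right hy.1⟩

end IsRepar1

section Matching

variable {R B f g f' g' : ℝ → ℝ}

theorem cost1_nonneg : 0 ≤ cost1 R B f g :=
  Real.sSup_nonneg (by rintro c ⟨t, -, rfl⟩; positivity)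

theorem cost1_le_cost1 (hbdd : ∃ C, ∀ t ∈ Icc (0 : ℝ) 1, |R (f t) - B (g t)| ≤ C)
    (h : ∀ t ∈ Icc (0 : ℝ) 1, |R (f' t) - B (g' t)| ≤ |R (f t) - B (g t)|) :
    cost1 R B f' g' ≤ cost1 R B f g := by
  obtain ⟨C, hC⟩ := hbdd
  refine Real.sSup_le ?_ cost1_nonneg
  rintro _ ⟨t, ht, rfl⟩
  exact (h t ht).trans (le_csSup ⟨C, by rintro _ ⟨s, hs, rfl⟩; exact hC s hs⟩ ⟨t, ht, rfl⟩)

theorem dF1_le_dF1_of_forall_exists_cost1_le {a b c d a' b' c' d' : ℝ} (hab : a ≤ b)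
    (hcd : c ≤ d)
    (h : ∀ f g, IsRepar1 f a b → IsRepar1 g c d →
      ∃ f' g', IsRepar1 f' a' b' ∧ IsRepar1 g' c' d' ∧ cost1 R B f' g' ≤ cost1 R B f g) :
    dF1 R B a' b' c' d' ≤ dF1 R B a b c d := by
  have hbdd : BddBelow
      {x | ∃ f g : ℝ → ℝ, IsRepar1 f a' b' ∧ IsRepar1 g c' d' ∧ x = cost1 R B f g} :=
    ⟨0, by rintro _ ⟨_, _, -, -, rfl⟩; exact cost1_nonneg⟩
  refine le_csInf ⟨_, _, _, IsRepar1.affine hab, IsRepar1.affine hcd, rfl⟩ ?_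
  rintro _ ⟨f, g, hf, hg, rfl⟩
  obtain ⟨f', g', hf', hg', hcost⟩ := h f g hf hg
  exact (csInf_le hbdd ⟨f', g', hf', hg', rfl⟩).trans hcost

end Matching

theorem advancing_to_prefix_minima_general
    (n m : ℕ)
    (R B : ℝ → ℝ) (hR : IsPoly1D R n) (hB : IsPoly1D B m)
    (hsepR : ∀ x ∈ Icc (1:ℝ) n, R x ≤ 0) (hsepB : ∀ y ∈ Icc (1:ℝ) m, 0 ≤ B y)
    (i j : ℕ) (hi1 : 1 ≤ i) (hin : i ≤ n) (hj1 : 1 ≤ j) (hjm : j ≤ m)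
    (hpi : ∀ x ∈ Icc (1:ℝ) (i : ℝ), |R (i : ℝ)| ≤ |R x|)
    (hpj : ∀ y ∈ Icc (1:ℝ) (j : ℝ), |B (j : ℝ)| ≤ |B y|) :
    dF1 R B (i : ℝ) (n : ℝ) (j : ℝ) (m : ℝ) ≤ dF1 R B 1 (n : ℝ) 1 (m : ℝ) := by
  have hi1' : (1 : ℝ) ≤ i := by exact_mod_cast hi1
  have hin' : (i : ℝ) ≤ n := by exact_mod_cast hin
  have hj1' : (1 : ℝ) ≤ j := by exact_mod_cast hj1
  have hjm' : (j : ℝ) ≤ m := by exact_mod_cast hjm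
  obtain ⟨CR, hCR⟩ := hR.exists_abs_le
  obtain ⟨CB, hCB⟩ := hB.exists_abs_le
  refine dF1_le_dF1_of_forall_exists_cost1_le (hi1'.trans hin') (hj1'.trans hjm') fun f g hf hg =>
    ⟨_, _, hf.max_const hi1' hin', hg.max_const hj1' hjm', cost1_le_cost1 ?_ fun t ht => ?_⟩
  · exact ⟨CR + CB, fun t ht =>
      (abs_sub _ _).trans (add_le_add (hCR _ (hf.2.1 ht)) (hCB _ (hg.2.1 ht)))⟩
  have hx := hf.2.1 ht
  have hy := hg.2.1 ht
  have hx' : max (i : ℝ) (f t) ∈ Icc (1 : ℝ) n := ⟨hi1'.trans (le_max_left _ _), max_le hin' hx.2⟩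
  have hy' : max (j : ℝ) (g t) ∈ Icc (1 : ℝ) m := ⟨hj1'.trans (le_max_left _ _), max_le hjm' hy.2⟩
  rw [abs_sub_eq_abs_add_abs_of_nonpos_of_nonneg (hsepR _ hx') (hsepB _ hy'),
    abs_sub_eq_abs_add_abs_of_nonpos_of_nonneg (hsepR _ hx) (hsepB _ hy)]
  exact add_le_add (IsPrefixMin.abs_apply_max_le hpi hx.1) (IsPrefixMin.abs_apply_max_le hpj hy.1)

/-- For a prefix-minimum vertex `R i` of `R` and a prefix-minimum
vertex `B j` of `B`, we have `d_F(R|[i, n], B|[j, m]) ≤ d_F(R, B)`. -/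
theorem advancing_to_prefix_minima
    (n m : ℕ) (hn : 1 ≤ n) (hm : 1 ≤ m)
    (R B : ℝ → ℝ) (hR : IsPoly1D R n) (hB : IsPoly1D B m)
    (hsepR : ∀ x ∈ Icc (1:ℝ) n, R x ≤ 0) (hsepB : ∀ y ∈ Icc (1:ℝ) m, 0 ≤ B y)
    (i j : ℕ) (hi1 : 1 ≤ i) (hin : i ≤ n) (hj1 : 1 ≤ j) (hjm : j ≤ m)
    (hpi : ∀ x ∈ Icc (1:ℝ) (i : ℝ), |R (i : ℝ)| ≤ |R x|)
    (hpj : ∀ y ∈ Icc (1:ℝ) (j : ℝ), |B (j : ℝ)| ≤ |B y|) :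
    dF1 R B (i : ℝ) (n : ℝ) (j : ℝ) (m : ℝ) ≤ dF1 R B 1 (n : ℝ) 1 (m : ℝ) :=
  advancing_to_prefix_minima_general n m R B hR hB hsepR hsepB i j hi1 hin hj1 hjm hpi hpj
end
end

section
/- Let s = (i, j) ∈ F_δ be an integer point, let t = (i', j') be an integer point that is the endpoint of some prefix-minima δ-matching starting at s, and let π be a maximal horizontal-greedy δ-matching starting at s. Then there exists a point t̂ = (i', ĵ) on π with ĵ ≤ j' such that the vertical segment {i'} × [ĵ, j'] is contained in F_δ. -/
/-!
Induct along the vertices of the given matching `σ`, keeping the invariant that `π` passes through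
a point directly below the current vertex, joined to it by a free vertical segment. A vertical edge
of `σ` only lengthens that segment. For a horizontal edge of `σ` at height `b` from column `x` to
column `a`, follow `π` from its point below `(x, b)`. As long as `π` stays weakly below height `b`
its current column stays free up to height `b`: along prefix minima `|R|` decreases and `R ≤ 0`,
so `B y - R x` decreases. If `π` climbs above height `b` before column `a`, greediness at the
crossing point sends it along the free row to `(a, b)`; if `π` ends before column `a`, it could be
prolonged (along the farthest free row, or else up to the nearest free prefix minimum of the
column) into a larger horizontal-greedy matching, contradicting maximality. Hence `π` reaches
column `a` weakly below `b`.
-/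

open Set

noncomputable section

/-- General position: the vertex values are pairwise distinct. -/
def GeneralPosition (R : ℝ → ℝ) (n : ℕ) : Prop :=
  ∀ k l : ℕ, 1 ≤ k → k ≤ n → 1 ≤ l → l ≤ n → k ≠ l → R (k : ℝ) ≠ R (l : ℝ)

/-- The `δ`-free space `F_δ = {(x,y) ∈ [1,n] × [1,m] : B y − R x ≤ δ}`. -/
def freeSpace (R B : ℝ → ℝ) (n m : ℕ) (δ : ℝ) : Set (ℝ × ℝ) :=
  {p : ℝ × ℝ | p.1 ∈ Icc (1:ℝ) (n : ℝ) ∧ p.2 ∈ Icc (1:ℝ) (m : ℝ) ∧ B p.2 - R p.1 ≤ δ}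

/-- `A i'` is a prefix-minimum of `A[i, ∞)`: `|A i'| ≤ |A x|` for all `x ∈ [i, i']`. -/
def PrefixMin (A : ℝ → ℝ) (i i' : ℤ) : Prop :=
  i ≤ i' ∧ ∀ x ∈ Icc (i : ℝ) (i' : ℝ), |A (i' : ℝ)| ≤ |A x|

/-- A rectilinear path, given by its sequence of vertices (endpoints and
turning points). -/
structure RectPath where
  N : ℕ
  vert : Fin (N + 1) → ℝ × ℝ

/-- The last vertex (endpoint) of a rectilinear path. -/
def RectPath.last (π : RectPath) : ℝ × ℝ := π.vert (Fin.last π.N)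

/-- The image of a rectilinear path: the union of the segments between
consecutive vertices. -/
def RectPath.image (π : RectPath) : Set (ℝ × ℝ) :=
  insert (π.vert 0) (⋃ k : Fin π.N, segment ℝ (π.vert k.castSucc) (π.vert k.succ))

/-- Each edge of the path is an axis-parallel segment, and the path is
nondecreasing in both coordinates. -/
def RectPath.IsRectilinear (π : RectPath) : Prop :=
  ∀ k : Fin π.N,
    ((π.vert k.castSucc).1 = (π.vert k.succ).1 ∧ (π.vert k.castSucc).2 < (π.vert k.succ).2) ∨
    ((π.vert k.castSucc).2 = (π.vert k.succ).2 ∧ (π.vert k.castSucc).1 < (π.vert k.succ).1)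

/-- A prefix-minima `δ`-matching starting at the integer point `s = (i, j)`:
a monotone rectilinear path inside the `δ`-free space starting at `s`, all of
whose vertices are integer points `(i', j')` with `R i'` a prefix-minimum of
`R[i, n]` and `B j'` a prefix-minimum of `B[j, m]`. -/
def IsPMMatching (R B : ℝ → ℝ) (n m : ℕ) (δ : ℝ) (s : ℤ × ℤ) (π : RectPath) : Prop :=
  π.IsRectilinear ∧
  π.vert 0 = ((s.1 : ℝ), (s.2 : ℝ)) ∧
  π.image ⊆ freeSpace R B n m δ ∧
  ∀ k : Fin (π.N + 1), ∃ i' j' : ℤ,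
    π.vert k = ((i' : ℝ), (j' : ℝ)) ∧ PrefixMin R s.1 i' ∧ PrefixMin B s.2 j'

/-- A horizontal-greedy `δ`-matching starting at `s`: a prefix-minima
`δ`-matching that, from any integer prefix-minima point `(i', j')` on it, either
traverses any available horizontal free-space segment `[i', î] × {j'}` towards a
further prefix-minimum `R î`, or terminates at `(i', j')`. -/
def IsHorizGreedy (R B : ℝ → ℝ) (n m : ℕ) (δ : ℝ) (s : ℤ × ℤ) (π : RectPath) : Prop :=
  IsPMMatching R B n m δ s π ∧
  ∀ i' j' : ℤ, ((i' : ℝ), (j' : ℝ)) ∈ π.image →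
    PrefixMin R s.1 i' → PrefixMin B s.2 j' →
    ∀ ihat : ℤ, i' < ihat → PrefixMin R s.1 ihat →
      (Icc (i' : ℝ) (ihat : ℝ) ×ˢ ({(j' : ℝ)} : Set ℝ) ⊆ freeSpace R B n m δ) →
      (Icc (i' : ℝ) (ihat : ℝ) ×ˢ ({(j' : ℝ)} : Set ℝ) ⊆ π.image ∨
        π.last = ((i' : ℝ), (j' : ℝ)))

/-- `C(π)`: the set of integers `i` such that `π` has a vertical edge contained
in the line `x = i`. -/
def vertLines (π : RectPath) : Set ℤ :=
  {i : ℤ | ∃ k : Fin π.N, (π.vert k.castSucc).1 = (i : ℝ) ∧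
    (π.vert k.castSucc).1 = (π.vert k.succ).1}

/-- `R(π)`: the set of integers `j` such that `π` has a horizontal edge contained
in the line `y = j`. -/
def horizLines (π : RectPath) : Set ℤ :=
  {j : ℤ | ∃ k : Fin π.N, (π.vert k.castSucc).2 = (j : ℝ) ∧
    (π.vert k.castSucc).2 = (π.vert k.succ).2}

/-- Two paths are interior-disjoint if their images share no point that is, for
both paths, distinct from that path's two endpoints. -/
def InteriorDisjoint (π π' : RectPath) : Prop :=
  ∀ p ∈ π.image ∩ π'.image,
    (p = π.vert 0 ∨ p = π.last) ∨ (p = π'.vert 0 ∨ p = π'.last)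

/-- A horizontal-greedy `δ`-matching starting at `s` is maximal if it is not a
proper initial portion of another horizontal-greedy `δ`-matching starting at `s`. -/
def IsMaximalHG (R B : ℝ → ℝ) (n m : ℕ) (δ : ℝ) (s : ℤ × ℤ) (π : RectPath) : Prop :=
  IsHorizGreedy R B n m δ s π ∧
  ∀ π' : RectPath, IsHorizGreedy R B n m δ s π' → π.image ⊆ π'.image →
    π'.image = π.image

lemma segment_horizontal {x₁ x₂ : ℝ} (y : ℝ) (hx : x₁ ≤ x₂) :
    segment ℝ (x₁, y) (x₂, y) = Icc x₁ x₂ ×ˢ {y} := by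
  rw [← Prod.image_mk_segment_left, segment_eq_Icc hx, prod_singleton]

lemma segment_vertical (x : ℝ) {y₁ y₂ : ℝ} (hy : y₁ ≤ y₂) :
    segment ℝ (x, y₁) (x, y₂) = {x} ×ˢ Icc y₁ y₂ := by
  rw [← Prod.image_mk_segment_right, segment_eq_Icc hy, singleton_prod]

namespace RectPath

lemma vert_mem_image (π : RectPath) (k : Fin (π.N + 1)) : π.vert k ∈ π.image := by
  rcases Fin.eq_zero_or_eq_succ k with rfl | ⟨j, rfl⟩
  · exact mem_insert _ _
  · exact mem_insert_of_mem _ (mem_iUnion.2 ⟨j, right_mem_segment ℝ _ _⟩)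

lemma segment_subset_image (π : RectPath) (k : Fin π.N) :
    segment ℝ (π.vert k.castSucc) (π.vert k.succ) ⊆ π.image :=
  fun _ hp => mem_insert_of_mem _ (mem_iUnion.2 ⟨k, hp⟩)

lemma IsRectilinear.monotone {π : RectPath} (h : π.IsRectilinear) : Monotone π.vert := by
  refine Fin.monotone_iff_le_succ.2 fun k => ?_
  rcases h k with ⟨h₁, h₂⟩ | ⟨h₁, h₂⟩
  · exact Prod.le_def.2 ⟨h₁.le, h₂.le⟩
  · exact Prod.le_def.2 ⟨h₂.le, h₁.le⟩

lemma IsRectilinear.le_last {π : RectPath} (h : π.IsRectilinear) {p : ℝ × ℝ}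
    (hp : p ∈ π.image) : p ≤ π.last := by
  rcases hp with rfl | hp
  · exact h.monotone (Fin.zero_le _)
  · obtain ⟨k, hk⟩ := mem_iUnion.1 hp
    exact (segment_subset_Icc (h.monotone k.castSucc_le_succ) hk).2.trans
      (h.monotone (Fin.le_last _))

abbrev snoc (π : RectPath) (q : ℝ × ℝ) : RectPath := ⟨π.N + 1, Fin.snoc π.vert q⟩

lemma snoc_last (π : RectPath) (q : ℝ × ℝ) : (π.snoc q).last = q :=
  Fin.snoc_last (α := fun _ => ℝ × ℝ) ..

lemma image_snoc (π : RectPath) (q : ℝ × ℝ) :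
    (π.snoc q).image = π.image ∪ segment ℝ π.last q := by
  ext p
  simp only [image, Fin.snoc_apply_zero, Fin.succ_castSucc, Fin.snoc_castSucc, mem_insert_iff,
    mem_iUnion, Fin.exists_fin_succ', Fin.succ_last, Fin.snoc_last, mem_union, or_assoc, last]

lemma IsRectilinear.snoc {π : RectPath} (h : π.IsRectilinear) {q : ℝ × ℝ}
    (hq : (π.last.1 = q.1 ∧ π.last.2 < q.2) ∨ (π.last.2 = q.2 ∧ π.last.1 < q.1)) :
    (π.snoc q).IsRectilinear := by
  refine Fin.lastCases ?_ (fun k => ?_)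
  · simpa [last] using hq
  · simpa only [Fin.succ_castSucc, Fin.snoc_castSucc] using h k

end RectPath

def UpRightFree (F : Set (ℝ × ℝ)) (p q : ℝ × ℝ) : Prop :=
  p.1 ≤ q.1 ∧ p.2 ≤ q.2 ∧ {p.1} ×ˢ Icc p.2 q.2 ⊆ F ∧ Icc p.1 q.1 ×ˢ {q.2} ⊆ F

def RectPath.CoversBelow (π : RectPath) (F : Set (ℝ × ℝ)) (q : ℝ × ℝ) : Prop :=
  ∃ y ≤ q.2, (q.1, y) ∈ π.image ∧ {q.1} ×ˢ Icc y q.2 ⊆ F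

namespace RectPath

variable {π : RectPath} {F : Set (ℝ × ℝ)}

lemma coversBelow_of_mem {q : ℝ × ℝ} (hq : q ∈ π.image) (hqF : q ∈ F) :
    π.CoversBelow F q :=
  ⟨q.2, le_rfl, hq, by rwa [Icc_self, singleton_prod_singleton, singleton_subset_iff]⟩

lemma CoversBelow.of_column {x y z : ℝ} (h : π.CoversBelow F (x, y)) (hyz : y ≤ z)
    (hcol : {x} ×ˢ Icc y z ⊆ F) : π.CoversBelow F (x, z) := by
  obtain ⟨w, hwy, hw, hcol'⟩ := h
  refine ⟨w, hwy.trans hyz, hw, ?_⟩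
  rw [← Icc_union_Icc_eq_Icc hwy hyz, prod_union]
  exact union_subset hcol' hcol

lemma coversBelow_or_lt {p q : ℝ × ℝ} (hp : p ∈ π.image) (hpq : UpRightFree F p q) :
    π.CoversBelow F q ∨ p.1 < q.1 := by
  rcases hpq.1.eq_or_lt with heq | hlt
  · exact Or.inl ⟨p.2, hpq.2.1, heq ▸ hp, heq ▸ hpq.2.2.1⟩
  · exact Or.inr hlt

end RectPath

section Sweep

variable {R B : ℝ → ℝ} {n m : ℕ} {δ : ℝ} {s : ℤ × ℤ} {π : RectPath}

local notation "𝓕" => freeSpace R B n m δ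

lemma IsPMMatching.prefixMin_of_last_eq (hπ : IsPMMatching R B n m δ s π) {x y : ℤ}
    (hlast : π.last = ((x : ℝ), (y : ℝ))) : PrefixMin R s.1 x ∧ PrefixMin B s.2 y := by
  obtain ⟨x', y', hv, hx, hy⟩ := hπ.2.2.2 (Fin.last π.N)
  rw [← RectPath.last, hlast, Prod.mk.injEq, Int.cast_inj, Int.cast_inj] at hv
  obtain ⟨rfl, rfl⟩ := hv
  exact ⟨hx, hy⟩

lemma IsPMMatching.snoc (hπ : IsPMMatching R B n m δ s π) {x y : ℤ}
    (hstep : (π.last.1 = x ∧ π.last.2 < y) ∨ (π.last.2 = y ∧ π.last.1 < x))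
    (hseg : segment ℝ π.last ((x : ℝ), (y : ℝ)) ⊆ 𝓕)
    (hx : PrefixMin R s.1 x) (hy : PrefixMin B s.2 y) :
    IsPMMatching R B n m δ s (π.snoc (x, y)) := by
  obtain ⟨hrect, hstart, hfree, hvert⟩ := hπ
  refine ⟨hrect.snoc hstep, by simpa using hstart, ?_, Fin.lastCases ?_ fun k => ?_⟩
  · rw [π.image_snoc]
    exact union_subset hfree hseg
  · exact ⟨x, y, π.snoc_last _, hx, hy⟩
  · simpa using hvert k

lemma IsMaximalHG.le_last_of_snoc (hπ : IsMaximalHG R B n m δ s π) {q : ℝ × ℝ}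
    (hq : IsHorizGreedy R B n m δ s (π.snoc q)) : q ≤ π.last := by
  have himage := hπ.2 _ hq (π.image_snoc q ▸ subset_union_left)
  have hqmem : q ∈ (π.snoc q).image := π.image_snoc q ▸ Or.inr (right_mem_segment ℝ _ _)
  exact hπ.1.1.1.le_last (himage ▸ hqmem)

lemma IsHorizGreedy.snoc_horizontal (hπ : IsHorizGreedy R B n m δ s π) {x y i : ℤ}
    (hlast : π.last = ((x : ℝ), (y : ℝ))) (hxi : x < i) (hi : PrefixMin R s.1 i)
    (hrow : Icc (x : ℝ) i ×ˢ {(y : ℝ)} ⊆ 𝓕)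
    (hfar : ∀ i', x < i' → PrefixMin R s.1 i' →
      Icc (x : ℝ) i' ×ˢ {(y : ℝ)} ⊆ 𝓕 → i' ≤ i) :
    IsHorizGreedy R B n m δ s (π.snoc (i, y)) := by
  obtain ⟨hPM, hgreedy⟩ := hπ
  have hxi' : (x : ℝ) < i := by exact_mod_cast hxi
  have hseg : segment ℝ π.last ((i : ℝ), (y : ℝ)) = Icc (x : ℝ) i ×ˢ {(y : ℝ)} := by
    rw [hlast, segment_horizontal _ hxi'.le]
  have himage : (π.snoc (i, y)).image = π.image ∪ Icc (x : ℝ) i ×ˢ {(y : ℝ)} := by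
    rw [π.image_snoc, hseg]
  have hnew : ∀ i' ihat : ℤ, x ≤ i' → i' ≤ i → i' < ihat → PrefixMin R s.1 ihat →
      Icc (i' : ℝ) ihat ×ˢ {(y : ℝ)} ⊆ 𝓕 →
      Icc (i' : ℝ) ihat ×ˢ {(y : ℝ)} ⊆ (π.snoc (i, y)).image := by
    intro i' ihat hxi' hi'i hlt hihat hfree
    have hxi'R : (x : ℝ) ≤ i' := by exact_mod_cast hxi'
    have hi'iR : (i' : ℝ) ≤ i := by exact_mod_cast hi'i
    have hjoin : Icc (x : ℝ) ihat ×ˢ {(y : ℝ)} ⊆ 𝓕 := by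
      rw [← Icc_union_Icc_eq_Icc hxi'R (by exact_mod_cast hlt.le), union_prod]
      exact union_subset ((prod_mono (Icc_subset_Icc_right hi'iR) subset_rfl).trans hrow) hfree
    have hihat_le : (ihat : ℝ) ≤ i := by exact_mod_cast hfar ihat (by omega) hihat hjoin
    rw [himage]
    exact subset_union_of_subset_right (prod_mono (Icc_subset_Icc hxi'R hihat_le) subset_rfl) _
  refine ⟨hPM.snoc (Or.inr ⟨by rw [hlast], by rw [hlast]; exact hxi'⟩) (hseg.le.trans hrow) hi
    (hPM.prefixMin_of_last_eq hlast).2, ?_⟩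
  intro i' j' hmem hi' hj' ihat hlt hihat hfree
  left
  rw [himage] at hmem
  rcases hmem with hmem | ⟨⟨h₁, h₂⟩, h₃⟩
  · rcases hgreedy i' j' hmem hi' hj' ihat hlt hihat hfree with htrav | hend
    · exact htrav.trans (himage ▸ subset_union_left)
    · rw [hlast, Prod.mk.injEq, Int.cast_inj, Int.cast_inj] at hend
      obtain ⟨rfl, rfl⟩ := hend
      exact hnew x ihat le_rfl hxi.le hlt hihat hfree
  · dsimp only at h₁ h₂ h₃
    rw [mem_singleton_iff, Int.cast_inj] at h₃
    subst h₃
    exact hnew i' ihat (by exact_mod_cast h₁) (by exact_mod_cast h₂) hlt hihat hfree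

lemma IsHorizGreedy.snoc_vertical (hπ : IsHorizGreedy R B n m δ s π) {x y j : ℤ}
    (hlast : π.last = ((x : ℝ), (y : ℝ))) (hyj : y < j) (hj : PrefixMin B s.2 j)
    (hcol : {(x : ℝ)} ×ˢ Icc (y : ℝ) j ⊆ 𝓕)
    (hnear : ∀ j', y < j' → j' < j → ¬ PrefixMin B s.2 j')
    (hrow : ∀ i, x < i → PrefixMin R s.1 i → ¬ Icc (x : ℝ) i ×ˢ {(y : ℝ)} ⊆ 𝓕) :
    IsHorizGreedy R B n m δ s (π.snoc (x, j)) := by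
  obtain ⟨hPM, hgreedy⟩ := hπ
  have hyj' : (y : ℝ) < j := by exact_mod_cast hyj
  have hseg : segment ℝ π.last ((x : ℝ), (j : ℝ)) = {(x : ℝ)} ×ˢ Icc (y : ℝ) j := by
    rw [hlast, segment_vertical _ hyj'.le]
  refine ⟨hPM.snoc (Or.inl ⟨by rw [hlast], by rw [hlast]; exact hyj'⟩) (hseg.le.trans hcol)
    (hPM.prefixMin_of_last_eq hlast).1 hj, ?_⟩
  intro i' j' hmem hi' hj' ihat hlt hihat hfree
  rw [π.image_snoc, hseg] at hmem
  rcases hmem with hmem | ⟨h₁, h₂, h₃⟩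
  · rcases hgreedy i' j' hmem hi' hj' ihat hlt hihat hfree with htrav | hend
    · exact Or.inl (htrav.trans (π.image_snoc _ ▸ subset_union_left))
    · rw [hlast, Prod.mk.injEq, Int.cast_inj, Int.cast_inj] at hend
      obtain ⟨rfl, rfl⟩ := hend
      exact (hrow ihat hlt hihat hfree).elim
  · dsimp only at h₁ h₂ h₃
    rw [mem_singleton_iff, Int.cast_inj] at h₁
    subst h₁
    rcases (show y ≤ j' by exact_mod_cast h₂).eq_or_lt with rfl | hyj'
    · exact (hrow ihat hlt hihat hfree).elim
    rcases (show j' ≤ j by exact_mod_cast h₃).eq_or_lt with rfl | hj'j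
    · exact Or.inr (π.snoc_last _)
    · exact (hnear j' hyj' hj'j hj').elim

lemma IsMaximalHG.not_row_subset (hπ : IsMaximalHG R B n m δ s π) {x y i : ℤ}
    (hlast : π.last = ((x : ℝ), (y : ℝ))) (hxi : x < i) (hi : PrefixMin R s.1 i) :
    ¬ Icc (x : ℝ) i ×ˢ {(y : ℝ)} ⊆ 𝓕 := by
  intro hrow
  obtain ⟨i₀, ⟨hxi₀, hi₀, hrow₀⟩, hfar⟩ := Int.exists_greatest_of_bdd
    (P := fun i => x < i ∧ PrefixMin R s.1 i ∧ Icc (x : ℝ) i ×ˢ {(y : ℝ)} ⊆ 𝓕)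
    ⟨n, fun i ⟨hxi, _, hrow⟩ => by
      have hmem : ((i : ℝ), (y : ℝ)) ∈ Icc (x : ℝ) i ×ˢ {(y : ℝ)} :=
        ⟨right_mem_Icc.2 (by exact_mod_cast hxi.le), rfl⟩
      have hin : (i : ℝ) ≤ n := (hrow hmem).1.2
      exact_mod_cast hin⟩
    ⟨i, hxi, hi, hrow⟩
  have hle := hπ.le_last_of_snoc (hπ.1.snoc_horizontal hlast hxi₀ hi₀ hrow₀
    fun i' h₁ h₂ h₃ => hfar i' ⟨h₁, h₂, h₃⟩)
  rw [hlast, Prod.mk_le_mk] at hle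
  exact hxi₀.not_ge (by exact_mod_cast hle.1)

lemma IsMaximalHG.not_column_subset (hπ : IsMaximalHG R B n m δ s π) {x y j : ℤ}
    (hlast : π.last = ((x : ℝ), (y : ℝ))) (hyj : y < j) (hj : PrefixMin B s.2 j) :
    ¬ {(x : ℝ)} ×ˢ Icc (y : ℝ) j ⊆ 𝓕 := by
  intro hcol
  obtain ⟨j₀, ⟨hyj₀, hj₀, hcol₀⟩, hnear⟩ := Int.exists_least_of_bdd
    (P := fun j => y < j ∧ PrefixMin B s.2 j ∧ {(x : ℝ)} ×ˢ Icc (y : ℝ) j ⊆ 𝓕)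
    ⟨y, fun _ h => h.1.le⟩ ⟨j, hyj, hj, hcol⟩
  have hnear' : ∀ j', y < j' → j' < j₀ → ¬ PrefixMin B s.2 j' := fun j' h₁ h₂ h₃ =>
    (hnear j' ⟨h₁, h₃, (prod_mono subset_rfl
      (Icc_subset_Icc_right (by exact_mod_cast h₂.le))).trans hcol₀⟩).not_gt h₂
  have hle := hπ.le_last_of_snoc (hπ.1.snoc_vertical hlast hyj₀ hj₀ hcol₀ hnear'
    fun i h₁ h₂ => hπ.not_row_subset hlast h₁ h₂)
  rw [hlast, Prod.mk_le_mk] at hle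
  exact hyj₀.not_ge (by exact_mod_cast hle.2)

lemma column_subset_freeSpace_of_prefixMin (hsepR : ∀ x ∈ Icc (1 : ℝ) n, R x ≤ 0)
    {i x x' : ℤ} (hx : PrefixMin R i x) (hx' : PrefixMin R i x') (hxx' : x ≤ x')
    (hx'n : (x' : ℝ) ∈ Icc 1 (n : ℝ))
    {I : Set ℝ} (hcol : {(x : ℝ)} ×ˢ I ⊆ 𝓕) : {(x' : ℝ)} ×ˢ I ⊆ 𝓕 := by
  rintro ⟨_, y⟩ ⟨hx'', hy⟩
  rw [mem_singleton_iff] at hx''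
  subst hx''
  obtain ⟨hxn, hym, hle⟩ := hcol (show ((x : ℝ), y) ∈ _ from ⟨rfl, hy⟩)
  have habs : |R x'| ≤ |R x| := hx'.2 x ⟨by exact_mod_cast hx.1, by exact_mod_cast hxx'⟩
  rw [abs_of_nonpos (hsepR _ hx'n), abs_of_nonpos (hsepR _ hxn)] at habs
  exact ⟨hx'n, hym, by dsimp only at hle ⊢; linarith⟩

lemma IsHorizGreedy.coversBelow_of_crossing (hπ : IsHorizGreedy R B n m δ s π) {x a b : ℤ}
    {k : Fin (π.N + 1)} (hxb : ((x : ℝ), (b : ℝ)) ∈ π.image)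
    (hk : (b : ℝ) < (π.vert k).2)
    (hx : PrefixMin R s.1 x) (ha : PrefixMin R s.1 a) (hb : PrefixMin B s.2 b) (hxa : x < a)
    (hrow : Icc (x : ℝ) a ×ˢ {(b : ℝ)} ⊆ 𝓕) : π.CoversBelow 𝓕 (a, b) := by
  have hab : ((a : ℝ), (b : ℝ)) ∈ Icc (x : ℝ) a ×ˢ {(b : ℝ)} :=
    ⟨right_mem_Icc.2 (by exact_mod_cast hxa.le), rfl⟩
  rcases hπ.2 x b hxb hx hb a hxa ha hrow with htrav | hend
  · exact π.coversBelow_of_mem (htrav hab) (hrow hab)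
  · have hle := hπ.1.1.le_last (π.vert_mem_image k)
    rw [hend] at hle
    exact absurd hle.2 hk.not_ge

lemma IsHorizGreedy.coversBelow_or_upRightFree_succ (hsepR : ∀ x ∈ Icc (1 : ℝ) n, R x ≤ 0)
    (hπ : IsHorizGreedy R B n m δ s π) (k : Fin π.N) {x a b : ℤ} {y : ℝ}
    (hp : ((x : ℝ), y) ∈ segment ℝ (π.vert k.castSucc) (π.vert k.succ))
    (hx : PrefixMin R s.1 x) (ha : PrefixMin R s.1 a) (hb : PrefixMin B s.2 b) (hxa : x < a)
    (hfree : UpRightFree 𝓕 ((x : ℝ), y) (a, b)) :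
    π.CoversBelow 𝓕 (a, b) ∨ UpRightFree 𝓕 (π.vert k.succ) (a, b) := by
  obtain ⟨-, hyb, hcol, hrow⟩ := hfree
  dsimp only at hyb hcol hrow
  obtain ⟨x₁, y₁, hv₁, -, -⟩ := hπ.1.2.2.2 k.castSucc
  obtain ⟨x₂, y₂, hv₂, hx₂, -⟩ := hπ.1.2.2.2 k.succ
  have hedge := π.segment_subset_image k
  have hstep := hπ.1.1 k
  rw [hv₁, hv₂] at hp hedge hstep
  rw [hv₂]
  simp only [Int.cast_inj, Int.cast_lt] at hstep
  rcases hstep with ⟨rfl, hy₁₂⟩ | ⟨rfl, hx₁₂⟩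
  · rw [segment_vertical _ (by exact_mod_cast hy₁₂.le)] at hp hedge
    obtain ⟨hxx₁, hy₁y, hyy₂⟩ := hp
    rw [mem_singleton_iff, Int.cast_inj] at hxx₁
    subst hxx₁
    rcases le_or_gt (y₂ : ℝ) b with hy₂b | hby₂
    · exact Or.inr ⟨show (x : ℝ) ≤ a by exact_mod_cast hxa.le, hy₂b,
        (prod_mono subset_rfl (Icc_subset_Icc_left hyy₂)).trans hcol, hrow⟩
    · exact Or.inl (hπ.coversBelow_of_crossing (k := k.succ)
        (hedge ⟨rfl, hy₁y.trans hyb, hby₂.le⟩) (by rw [hv₂]; exact hby₂) hx ha hb hxa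
        hrow)
  · rw [segment_horizontal _ (by exact_mod_cast hx₁₂.le)] at hp hedge
    obtain ⟨⟨hx₁x, hxx₂⟩, hyy₁⟩ := hp
    dsimp only at hx₁x hxx₂ hyy₁
    rw [mem_singleton_iff] at hyy₁
    subst hyy₁
    have hxx₂' : x ≤ x₂ := by exact_mod_cast hxx₂
    rcases le_or_gt a x₂ with hax₂ | hx₂a
    · have han : (a : ℝ) ∈ Icc 1 (n : ℝ) :=
        (hrow (mk_mem_prod (right_mem_Icc.2 (by exact_mod_cast hxa.le)) rfl)).1
      exact Or.inl ⟨y₁, hyb, hedge (mk_mem_prod (a := (a : ℝ))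
        ⟨hx₁x.trans (by exact_mod_cast hxa.le), by exact_mod_cast hax₂⟩ rfl),
        column_subset_freeSpace_of_prefixMin hsepR hx ha hxa.le han hcol⟩
    · have hx₂n : (x₂ : ℝ) ∈ Icc 1 (n : ℝ) :=
        (hrow (mk_mem_prod ⟨hxx₂, by exact_mod_cast hx₂a.le⟩ rfl)).1
      exact Or.inr ⟨show (x₂ : ℝ) ≤ a by exact_mod_cast hx₂a.le, hyb,
        column_subset_freeSpace_of_prefixMin hsepR hx hx₂ hxx₂' hx₂n hcol,
        (prod_mono (Icc_subset_Icc_left hxx₂) subset_rfl).trans hrow⟩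

lemma IsMaximalHG.not_upRightFree_last (hπ : IsMaximalHG R B n m δ s π) {x y a b : ℤ}
    (hlast : π.last = ((x : ℝ), (y : ℝ))) (hxa : x < a) (ha : PrefixMin R s.1 a)
    (hb : PrefixMin B s.2 b) (hfree : UpRightFree 𝓕 ((x : ℝ), y) (a, b)) : False := by
  obtain ⟨-, hyb, hcol, hrow⟩ := hfree
  rcases (Int.cast_le.1 hyb).eq_or_lt with rfl | hyb'
  · exact hπ.not_row_subset hlast hxa ha hrow
  · exact hπ.not_column_subset hlast hyb' hb hcol

lemma IsMaximalHG.coversBelow_of_upRightFree (hsepR : ∀ x ∈ Icc (1 : ℝ) n, R x ≤ 0)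
    (hπ : IsMaximalHG R B n m δ s π) {x a b : ℤ} {y : ℝ} (hp : ((x : ℝ), y) ∈ π.image)
    (hx : PrefixMin R s.1 x) (ha : PrefixMin R s.1 a) (hb : PrefixMin B s.2 b)
    (hfree : UpRightFree 𝓕 ((x : ℝ), y) (a, b)) : π.CoversBelow 𝓕 (a, b) := by
  have hvert : ∀ k, UpRightFree 𝓕 (π.vert k) (a, b) → π.CoversBelow 𝓕 (a, b) := by
    intro k
    induction k using Fin.reverseInduction with
    | last =>
      intro hk
      obtain ⟨x', y', hv, -, -⟩ := hπ.1.1.2.2.2 (Fin.last π.N)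
      rw [hv] at hk
      refine (π.coversBelow_or_lt (hv ▸ π.vert_mem_image _) hk).resolve_right fun hlt => ?_
      exact hπ.not_upRightFree_last hv (Int.cast_lt.1 hlt) ha hb hk
    | cast k ih =>
      intro hk
      obtain ⟨x', y', hv, hx', -⟩ := hπ.1.1.2.2.2 k.castSucc
      rw [hv] at hk
      refine (π.coversBelow_or_lt (hv ▸ π.vert_mem_image _) hk).elim id fun hlt => ?_
      exact (hπ.1.coversBelow_or_upRightFree_succ hsepR k (hv ▸ left_mem_segment ℝ _ _) hx'
        ha hb (Int.cast_lt.1 hlt) hk).elim id ih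
  refine (π.coversBelow_or_lt hp hfree).elim id fun hlt => ?_
  rcases hp with hp | hp
  · exact hvert 0 (hp ▸ hfree)
  · obtain ⟨k, hk⟩ := mem_iUnion.1 hp
    exact (hπ.1.coversBelow_or_upRightFree_succ hsepR k hk hx ha hb (Int.cast_lt.1 hlt)
      hfree).elim id (hvert k.succ)

lemma IsMaximalHG.coversBelow_of_row (hsepR : ∀ x ∈ Icc (1 : ℝ) n, R x ≤ 0)
    (hπ : IsMaximalHG R B n m δ s π) {x a b : ℤ} (hcov : π.CoversBelow 𝓕 (x, b))
    (hxa : x ≤ a)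
    (hx : PrefixMin R s.1 x) (ha : PrefixMin R s.1 a) (hb : PrefixMin B s.2 b)
    (hrow : Icc (x : ℝ) a ×ˢ {(b : ℝ)} ⊆ 𝓕) : π.CoversBelow 𝓕 (a, b) := by
  obtain ⟨y, hyb, hy, hcol⟩ := hcov
  exact hπ.coversBelow_of_upRightFree hsepR hy hx ha hb
    ⟨show (x : ℝ) ≤ a by exact_mod_cast hxa, hyb, hcol, hrow⟩

end Sweep

theorem lower_envelope_general
    (n m : ℕ)
    (R B : ℝ → ℝ)
    (hsepR : ∀ x ∈ Icc (1:ℝ) (n : ℝ), R x ≤ 0)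
    (δ : ℝ)
    (s t : ℤ × ℤ) (hs : ((s.1 : ℝ), (s.2 : ℝ)) ∈ freeSpace R B n m δ)
    (hT : ∃ σ : RectPath, IsPMMatching R B n m δ s σ ∧
      σ.last = ((t.1 : ℝ), (t.2 : ℝ)))
    (π : RectPath) (hπ : IsMaximalHG R B n m δ s π) :
    ∃ jhat : ℝ, jhat ≤ (t.2 : ℝ) ∧ ((t.1 : ℝ), jhat) ∈ π.image ∧
      ({((t.1 : ℝ))} : Set ℝ) ×ˢ Icc jhat (t.2 : ℝ) ⊆ freeSpace R B n m δ := by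
  obtain ⟨σ, hσ, hσt⟩ := hT
  suffices hcov : ∀ k, π.CoversBelow (freeSpace R B n m δ) (σ.vert k) by
    have ht : π.CoversBelow (freeSpace R B n m δ) σ.last := hcov _
    rwa [hσt] at ht
  intro k
  induction k using Fin.induction with
  | zero =>
    rw [hσ.2.1]
    exact π.coversBelow_of_mem (hπ.1.1.2.1 ▸ π.vert_mem_image 0) hs
  | succ k ih =>
    obtain ⟨x, y, hv, hx, hy⟩ := hσ.2.2.2 k.castSucc
    obtain ⟨x', y', hv', hx', -⟩ := hσ.2.2.2 k.succ
    have hedge := (σ.segment_subset_image k).trans hσ.2.2.1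
    have hstep := hσ.1 k
    rw [hv, hv'] at hedge hstep
    rw [hv] at ih
    rw [hv']
    simp only [Int.cast_inj, Int.cast_lt] at hstep
    rcases hstep with ⟨rfl, hyy'⟩ | ⟨rfl, hxx'⟩
    · have hyy'R : (y : ℝ) ≤ y' := by exact_mod_cast hyy'.le
      exact ih.of_column hyy'R (segment_vertical _ hyy'R ▸ hedge)
    · exact hπ.coversBelow_of_row hsepR ih hxx'.le hx hx' hy
        (segment_horizontal _ (Int.cast_le.2 hxx'.le) ▸ hedge)

/-- If `t = (i', j')` is the endpoint of some prefix-minima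
`δ`-matching starting at `s`, and `π` is a maximal horizontal-greedy
`δ`-matching starting at `s`, then `π` passes through a point `t̂ = (i', ĵ)`
vertically below `t` such that the vertical segment `{i'} × [ĵ, j']` lies in the
`δ`-free space. -/
theorem lower_envelope
    (n m : ℕ) (hn : 1 ≤ n) (hm : 1 ≤ m)
    (R B : ℝ → ℝ) (hR : IsPoly1D R n) (hB : IsPoly1D B m)
    (hsepR : ∀ x ∈ Icc (1:ℝ) (n : ℝ), R x ≤ 0)
    (hsepB : ∀ y ∈ Icc (1:ℝ) (m : ℝ), 0 ≤ B y)
    (hgpR : GeneralPosition R n) (hgpB : GeneralPosition B m)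
    (δ : ℝ) (hδ : 0 ≤ δ)
    (s t : ℤ × ℤ) (hs : ((s.1 : ℝ), (s.2 : ℝ)) ∈ freeSpace R B n m δ)
    (hT : ∃ σ : RectPath, IsPMMatching R B n m δ s σ ∧
      σ.last = ((t.1 : ℝ), (t.2 : ℝ)))
    (π : RectPath) (hπ : IsMaximalHG R B n m δ s π) :
    ∃ jhat : ℝ, jhat ≤ (t.2 : ℝ) ∧ ((t.1 : ℝ), jhat) ∈ π.image ∧
      ({((t.1 : ℝ))} : Set ℝ) ×ˢ Icc jhat (t.2 : ℝ) ⊆ freeSpace R B n m δ :=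
  lower_envelope_general n m R B hsepR δ s t hs hT π hπ
end
end
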